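/- arXiv:1807.01021 — 10 statements merged into one kernel-verified Lean document; each statement's English description precedes it below -/
import Mathlib

section
/- Let G be a graph of order n ≥ k+2. Then L_k(G) = k if and only if for every (k+1)-subset X of V(G), either the induced subgraph G[X] contains a vertex of degree k (in G[X]), or the k+1 vertices of X have a common neighbour in G. -/
open Finset

/-- `B` is a `k`-limited packing in `G`: every closed neighbourhood contains
at most `k` vertices of `B`. -/
def limPack {V : Type*} [Fintype V] [DecidableEq V] (G : SimpleGraph V)
    [DecidableRel G.Adj] (k : ℕ) (B : Finset V) : Prop :=
  ∀ v : V, (insert v (G.neighborFinset v) ∩ B).card ≤ k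

/-- The `k`-limited packing number `L_k(G)`. -/
noncomputable def limPackNum {V : Type*} [Fintype V] [DecidableEq V] (G : SimpleGraph V)
    [DecidableRel G.Adj] (k : ℕ) : ℕ :=
  sSup {n | ∃ B : Finset V, limPack G k B ∧ B.card = n}

/-! A set of `k + 1` vertices is a `k`-limited packing unless some closed neighbourhood
contains all of it, i.e. unless it has a vertex adjacent to all its other vertices or a
common neighbour outside it. Since every `k`-set is a packing, `L_k(G) = k` says exactly
that no `(k + 1)`-set is a packing. -/

namespace limPack

variable {V : Type*} [Fintype V] [DecidableEq V] {G : SimpleGraph V} [DecidableRel G.Adj]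
  {k : ℕ} {B B' : Finset V}

theorem of_card_le (hB : B.card ≤ k) : limPack G k B :=
  fun _ => (card_le_card inter_subset_right).trans hB

theorem mono (hB : limPack G k B) (h : B' ⊆ B) : limPack G k B' :=
  fun v => (card_le_card (inter_subset_inter_left h)).trans (hB v)

theorem card_le_limPackNum (hB : limPack G k B) : B.card ≤ limPackNum G k :=
  le_csSup ⟨Fintype.card V, by rintro n ⟨B, -, rfl⟩; exact card_le_univ B⟩ ⟨B, hB, rfl⟩

theorem iff_forall_not_subset (hB : B.card = k + 1) :
    limPack G k B ↔ ∀ v, ¬ B ⊆ insert v (G.neighborFinset v) := by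
  refine forall_congr' fun v => ?_
  rw [← not_lt, Nat.lt_iff_add_one_le, ← hB, not_iff_not]
  exact ⟨fun h => inter_eq_right.1 (eq_of_subset_of_card_le inter_subset_right h),
    fun h => by rw [inter_eq_right.2 h]⟩

end limPack

section

variable {V : Type*} [Fintype V] [DecidableEq V] (G : SimpleGraph V) [DecidableRel G.Adj]

theorem limPackNum_le_iff {k m : ℕ} :
    limPackNum G k ≤ m ↔ ∀ B : Finset V, limPack G k B → B.card ≤ m := by
  refine (csSup_le_iff' ⟨Fintype.card V, ?_⟩).trans ⟨fun h B hB => h _ ⟨B, hB, rfl⟩, ?_⟩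
  · rintro n ⟨B, -, rfl⟩
    exact card_le_univ B
  · rintro h n ⟨B, hB, rfl⟩
    exact h B hB

theorem limPackNum_eq_self_iff {k : ℕ} (hk : k ≤ Fintype.card V) :
    limPackNum G k = k ↔ ∀ X : Finset V, X.card = k + 1 → ¬ limPack G k X := by
  obtain ⟨K, -, hK⟩ := exists_subset_card_eq (s := (univ : Finset V)) (n := k) (by simpa)
  have hk_le : k ≤ limPackNum G k := hK.ge.trans (limPack.of_card_le hK.le).card_le_limPackNum
  rw [le_antisymm_iff, and_iff_left hk_le, limPackNum_le_iff]
  refine ⟨fun h X hX hXpack => by have := h X hXpack; omega, fun h B hB => ?_⟩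
  by_contra! hlt
  obtain ⟨X, hXB, hX⟩ := exists_subset_card_eq (s := B) (n := k + 1) hlt
  exact h X hX (hB.mono hXB)

theorem exists_subset_insert_neighborFinset_iff (X : Finset V) :
    (∃ v, X ⊆ insert v (G.neighborFinset v)) ↔
      (∃ v ∈ X, ∀ u ∈ X, u ≠ v → G.Adj v u) ∨ ∃ a : V, ∀ x ∈ X, G.Adj a x := by
  simp only [subset_iff, mem_insert, SimpleGraph.mem_neighborFinset]
  constructor
  · rintro ⟨v, hv⟩
    by_cases hvX : v ∈ X
    · exact .inl ⟨v, hvX, fun u hu huv => (hv hu).resolve_left huv⟩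
    · exact .inr ⟨v, fun x hx => (hv hx).resolve_left (ne_of_mem_of_not_mem hx hvX)⟩
  · rintro (⟨v, -, hv⟩ | ⟨a, ha⟩)
    · exact ⟨v, fun u hu => or_iff_not_imp_left.2 (hv u hu)⟩
    · exact ⟨a, fun x hx => .inr (ha x hx)⟩

end

theorem stmt_3_general {V : Type*} [Fintype V] [DecidableEq V] (G : SimpleGraph V)
    [DecidableRel G.Adj] (k : ℕ) (hn : k + 2 ≤ Fintype.card V) :
    limPackNum G k = k ↔
      ∀ X : Finset V, X.card = k + 1 →
        (∃ v ∈ X, ∀ u ∈ X, u ≠ v → G.Adj v u) ∨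
        (∃ a : V, ∀ x ∈ X, G.Adj a x) := by
  rw [limPackNum_eq_self_iff G (by omega)]
  refine forall_congr' fun X => imp_congr_right fun hX => ?_
  rw [limPack.iff_forall_not_subset hX, ← exists_subset_insert_neighborFinset_iff, not_forall_not]

theorem stmt_3 {V : Type*} [Fintype V] [DecidableEq V] (G : SimpleGraph V)
    [DecidableRel G.Adj] (k : ℕ) (hk : 1 ≤ k) (hn : k + 2 ≤ Fintype.card V) :
    limPackNum G k = k ↔
      ∀ X : Finset V, X.card = k + 1 →
        (∃ v ∈ X, ∀ u ∈ X, u ≠ v → G.Adj v u) ∨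
        (∃ a : V, ∀ x ∈ X, G.Adj a x) :=
  stmt_3_general G k hn
end

section
/- Let G be a graph of order at least k+1 with L_k(G) = k. Then the diameter of G is at most 2. -/
open Finset

theorem stmt_4 {V : Type*} [Fintype V] [DecidableEq V] (G : SimpleGraph V)
    [DecidableRel G.Adj] (k : ℕ) (hk : 1 ≤ k) (hn : k + 1 ≤ Fintype.card V)
    (hL : limPackNum G k = k) :
    ∀ u v : V, ∃ w : G.Walk u v, w.length ≤ 2 := by
  intro u v
  -- Find a (k+1)-set containing u and v
  have hcard : ({u, v} : Finset V).card ≤ k + 1 := by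
    calc ({u, v} : Finset V).card ≤ 2 := card_insert_le _ _ |>.trans (by simp)
    _ ≤ k + 1 := by omega
  obtain ⟨B, hBsub, hBcard⟩ :=
    Finset.exists_superset_card_eq (s := ({u, v} : Finset V)) hcard hn
  -- B is not a k-limited packing
  have hnot : ¬ limPack G k B := by
    intro hpack
    have hmem : k + 1 ∈ {n | ∃ C : Finset V, limPack G k C ∧ C.card = n} :=
      ⟨B, hpack, hBcard⟩
    have hbdd : BddAbove {n | ∃ C : Finset V, limPack G k C ∧ C.card = n} := by
      refine ⟨Fintype.card V, fun n hn => ?_⟩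
      obtain ⟨C, -, rfl⟩ := hn
      exact card_le_card (subset_univ C) |>.trans (by simp)
    have := le_csSup hbdd hmem
    rw [limPackNum] at hL
    omega
  -- so there is x with B ⊆ N[x]
  simp only [limPack, not_forall, not_le] at hnot
  obtain ⟨x, hx⟩ := hnot
  have hsub : B ⊆ insert x (G.neighborFinset x) := by
    have h1 : (insert x (G.neighborFinset x) ∩ B).card = B.card := by
      have := card_le_card (inter_subset_right (s₁ := insert x (G.neighborFinset x)) (s₂ := B))
      omega
    have := (Finset.eq_of_subset_of_card_le
      (inter_subset_right (s₁ := insert x (G.neighborFinset x)) (s₂ := B)) (le_of_eq h1.symm))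
    intro a ha
    rw [← this] at ha
    exact mem_of_mem_inter_left ha
  have hu : u = x ∨ G.Adj x u := by
    have := hsub (hBsub (mem_insert_self u {v}))
    simpa [SimpleGraph.mem_neighborFinset] using this
  have hv : v = x ∨ G.Adj x v := by
    have := hsub (hBsub (mem_insert_of_mem (mem_singleton_self v)))
    simpa [SimpleGraph.mem_neighborFinset] using this
  rcases hu with rfl | hu <;> rcases hv with h | hv
  · exact ⟨(h ▸ SimpleGraph.Walk.nil : G.Walk u v), by subst h; simp⟩
  · exact ⟨SimpleGraph.Walk.cons hv SimpleGraph.Walk.nil, by simp⟩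
  · subst h
    exact ⟨SimpleGraph.Walk.cons hu.symm SimpleGraph.Walk.nil, by simp⟩
  · exact ⟨SimpleGraph.Walk.cons hu.symm (SimpleGraph.Walk.cons hv SimpleGraph.Walk.nil), by simp⟩
end

section
/- If P = v_1 v_2 ⋯ v_{d+1} is a shortest path realizing the diameter d of a connected graph G (i.e., a geodesic of length d = diam(G)), then the vertex set of P is a 3-limited packing of G; consequently L_3(G) ≥ diam(G) + 1. -/
open Finset

lemma dist_getVert_le {V : Type*} {G : SimpleGraph V} {u v : V} (p : G.Walk u v)
    (hG : G.Connected) {i j : ℕ} (hij : i ≤ j) (hj : j ≤ p.length) :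
    G.dist (p.getVert i) (p.getVert j) ≤ j - i := by
  induction j, hij using Nat.le_induction with
  | base => simp
  | succ j hij ih =>
    have hadj : G.Adj (p.getVert j) (p.getVert (j+1)) :=
      p.adj_getVert_succ (by omega)
    have h1 : G.dist (p.getVert j) (p.getVert (j+1)) = 1 :=
      (SimpleGraph.dist_eq_one_iff_adj).mpr hadj
    have htri := hG.dist_triangle (u := p.getVert i) (v := p.getVert j) (w := p.getVert (j+1))
    have := ih (by omega)
    omega

lemma dist_getVert_eq {V : Type*} {G : SimpleGraph V} {u v : V} (p : G.Walk u v)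
    (hG : G.Connected) (hgeo : p.length = G.dist u v) {i j : ℕ} (hij : i ≤ j)
    (hj : j ≤ p.length) :
    G.dist (p.getVert i) (p.getVert j) = j - i := by
  have h1 : G.dist u (p.getVert i) ≤ i := by
    simpa using dist_getVert_le p hG (Nat.zero_le i) (le_trans hij hj)
  have h2 : G.dist (p.getVert j) v ≤ p.length - j := by
    simpa [p.getVert_length] using dist_getVert_le p hG hj le_rfl
  have h3 := dist_getVert_le p hG hij hj
  have t1 := hG.dist_triangle (u := u) (v := p.getVert i) (w := p.getVert j)
  have t2 := hG.dist_triangle (u := u) (v := p.getVert j) (w := v)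
  omega

theorem stmt_5 {V : Type*} [Fintype V] [DecidableEq V] (G : SimpleGraph V)
    [DecidableRel G.Adj] (hG : G.Connected) {u v : V} (p : G.Walk u v)
    (hp : p.IsPath) (hgeo : p.length = G.dist u v) (hd : p.length = G.diam) :
    limPack G 3 p.support.toFinset ∧ G.diam + 1 ≤ limPackNum G 3 := by
  have hpack : limPack G 3 p.support.toFinset := by
    intro w
    set N : Finset V := insert w (G.neighborFinset w) with hN
    have hdistN : ∀ x ∈ N, G.dist x w ≤ 1 := by
      intro x hx
      rcases Finset.mem_insert.mp hx with h | h
      · simp [h, SimpleGraph.dist_self]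
      · exact le_of_eq (SimpleGraph.dist_eq_one_iff_adj.mpr
          ((G.mem_neighborFinset w x).mp h).symm)
    set S : Finset ℕ := (Finset.range (p.length + 1)).filter (fun i => p.getVert i ∈ N) with hS
    have hsub : N ∩ p.support.toFinset ⊆ S.image p.getVert := by
      intro x hx
      rw [Finset.mem_inter, List.mem_toFinset] at hx
      obtain ⟨n, hn, hnl⟩ := SimpleGraph.Walk.mem_support_iff_exists_getVert.mp hx.2
      exact Finset.mem_image.mpr ⟨n, by
        simp only [hS, Finset.mem_filter, Finset.mem_range]
        exact ⟨⟨by omega, hn ▸ hx.1⟩, hn⟩⟩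
    have hScard : S.card ≤ 3 := by
      rcases S.eq_empty_or_nonempty with h | h
      · simp [h]
      · have hm := S.min'_mem h
        have hsub2 : S ⊆ Finset.Icc (S.min' h) (S.min' h + 2) := by
          intro j hj
          have hmin : S.min' h ≤ j := S.min'_le j hj
          have hj' := Finset.mem_filter.mp hj
          have hm' := Finset.mem_filter.mp hm
          have hjr := Finset.mem_range.mp hj'.1
          have hdist : G.dist (p.getVert (S.min' h)) (p.getVert j) = j - S.min' h :=
            dist_getVert_eq p hG hgeo hmin (by omega)
          have t := hG.dist_triangle (u := p.getVert (S.min' h)) (v := w) (w := p.getVert j)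
          have d1 := hdistN _ hm'.2
          have d2 := hdistN _ hj'.2
          rw [SimpleGraph.dist_comm] at d2
          simp only [Finset.mem_Icc]
          omega
        calc S.card ≤ (Finset.Icc (S.min' h) (S.min' h + 2)).card := Finset.card_le_card hsub2
          _ = 3 := by rw [Nat.card_Icc]; omega

    calc (N ∩ p.support.toFinset).card ≤ (S.image p.getVert).card := Finset.card_le_card hsub
      _ ≤ S.card := Finset.card_image_le
      _ ≤ 3 := hScard
  refine ⟨hpack, ?_⟩
  have hcard : p.support.toFinset.card = G.diam + 1 := by
    rw [List.toFinset_card_of_nodup hp.support_nodup, SimpleGraph.Walk.length_support, hd]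
  apply le_csSup
  · refine ⟨Fintype.card V, ?_⟩
    rintro n ⟨B, -, rfl⟩
    exact B.card_le_univ
  · exact ⟨p.support.toFinset, hpack, hcard⟩
end

section
/- Let G be a connected graph with Δ(G) ≥ k ≥ 3. Then L_k(G) ≥ diam(G) + k − 2. -/
open Finset

/-!
A geodesic from `u` to `w` with `dist u w = diam G` has `diam G + 1` vertices, and the distance
from `u` separates them; across an edge that distance changes by at most one, so it takes at most
three values on a closed neighbourhood `N[v]`, which therefore meets the geodesic in at most three
vertices. Hence `L₃(G) ≥ diam G + 1`. While `k ≤ Δ(G)`, a maximum `k`-limited packing cannot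
contain every vertex, and adding a missing one yields a `(k + 1)`-limited packing, so
`L_k(G) ≥ L₃(G) + (k - 3)`.
-/

namespace SimpleGraph

variable {V : Type*} {G : SimpleGraph V} {u v x : V}

lemma dist_mem_Icc_of_eq_or_adj (h : x = v ∨ G.Adj v x) :
    G.dist u x ∈ Set.Icc (G.dist u v - 1) (G.dist u v + 1) := by
  rcases h with rfl | hadj
  · constructor <;> omega
  · rcases hadj.diff_dist_adj (u := u) with h | h | h <;> constructor <;> omega

namespace Walk

lemma getVert_dist_of_length_eq_dist (p : G.Walk u v) (hp : p.length = G.dist u v)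
    (hx : x ∈ p.support) : p.getVert (G.dist u x) = x := by
  classical
  rw [← length_eq_dist_of_subwalk hp (p.isSubwalk_takeUntil hx)]
  exact p.getVert_length_takeUntil hx

lemma injOn_dist_support_of_length_eq_dist (p : G.Walk u v) (hp : p.length = G.dist u v) :
    Set.InjOn (G.dist u) {x | x ∈ p.support} := fun x hx y hy hxy => by
  rw [← p.getVert_dist_of_length_eq_dist hp hx, hxy, p.getVert_dist_of_length_eq_dist hp hy]

lemma card_support_toFinset_of_length_eq_dist [DecidableEq V] (p : G.Walk u v)
    (hp : p.length = G.dist u v) : p.support.toFinset.card = p.length + 1 := by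
  rw [List.toFinset_card_of_nodup (p.isPath_of_length_eq_dist hp).support_nodup, length_support]

end Walk

end SimpleGraph

section LimitedPacking

variable {V : Type*} [Fintype V] [DecidableEq V] {G : SimpleGraph V} [DecidableRel G.Adj]
  {k : ℕ} {B : Finset V}

theorem limPack_three_support_of_length_eq_dist {u w : V} (p : G.Walk u w)
    (hp : p.length = G.dist u w) : limPack G 3 p.support.toFinset := by
  intro v
  calc #(insert v (G.neighborFinset v) ∩ p.support.toFinset)
      ≤ #(Icc (G.dist u v - 1) (G.dist u v + 1)) := by
        refine card_le_card_of_injOn (G.dist u) (fun x hx => ?_) fun x hx y hy hxy =>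
          p.injOn_dist_support_of_length_eq_dist hp (by simp_all) (by simp_all) hxy
        simp only [coe_inter, Set.mem_inter_iff, mem_coe, mem_insert,
          SimpleGraph.mem_neighborFinset] at hx
        simpa using SimpleGraph.dist_mem_Icc_of_eq_or_adj hx.1
    _ ≤ 3 := by simp only [Nat.card_Icc]; omega

lemma bddAbove_limPack_card (G : SimpleGraph V) [DecidableRel G.Adj] (k : ℕ) :
    BddAbove {n | ∃ B : Finset V, limPack G k B ∧ #B = n} :=
  ⟨Fintype.card V, by rintro _ ⟨B, -, rfl⟩; exact card_le_univ B⟩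

lemma limPack.card_le_limPackNum_s6 (hB : limPack G k B) : #B ≤ limPackNum G k :=
  le_csSup (bddAbove_limPack_card G k) ⟨B, hB, rfl⟩

lemma exists_limPack_card_eq_limPackNum (G : SimpleGraph V) [DecidableRel G.Adj] (k : ℕ) :
    ∃ B, limPack G k B ∧ #B = limPackNum G k :=
  Nat.sSup_mem (s := {n | ∃ B : Finset V, limPack G k B ∧ #B = n})
    ⟨0, ∅, fun _ => by simp, card_empty⟩ (bddAbove_limPack_card G k)

lemma limPack.insert_succ (hB : limPack G k B) (x : V) : limPack G (k + 1) (insert x B) := by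
  intro v
  calc #(insert v (G.neighborFinset v) ∩ insert x B)
      ≤ #(insert x (insert v (G.neighborFinset v) ∩ B)) := by
        refine card_le_card fun y hy => ?_
        simp only [mem_inter, mem_insert] at hy ⊢
        tauto
    _ ≤ k + 1 := (card_insert_le _ _).trans (Nat.add_le_add_right (hB v) 1)

lemma limPack.exists_notMem [Nonempty V] (hB : limPack G k B) (hk : k ≤ G.maxDegree) :
    ∃ x, x ∉ B := by
  by_contra! hall
  obtain ⟨v, hv⟩ := G.exists_maximal_degree_vertex
  have := hB v
  rw [eq_univ_iff_forall.mpr hall, inter_univ,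
    card_insert_of_notMem (G.notMem_neighborFinset_self v), G.card_neighborFinset_eq_degree,
    ← hv] at this
  omega

theorem limPackNum_succ_le [Nonempty V] (hk : k ≤ G.maxDegree) :
    limPackNum G k + 1 ≤ limPackNum G (k + 1) := by
  obtain ⟨B, hB, hcard⟩ := exists_limPack_card_eq_limPackNum G k
  obtain ⟨x, hx⟩ := hB.exists_notMem hk
  rw [← hcard, ← card_insert_of_notMem hx]
  exact (hB.insert_succ x).card_le_limPackNum_s6

theorem limPackNum_add_le [Nonempty V] {j : ℕ} (h : k + j ≤ G.maxDegree + 1) :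
    limPackNum G k + j ≤ limPackNum G (k + j) := by
  induction j with
  | zero => rfl
  | succ j ih =>
    have := limPackNum_succ_le (G := G) (k := k + j) (by omega)
    have := ih (by omega)
    show limPackNum G k + (j + 1) ≤ limPackNum G (k + j + 1)
    omega

end LimitedPacking

theorem stmt_6 {V : Type*} [Fintype V] [DecidableEq V] (G : SimpleGraph V)
    [DecidableRel G.Adj] (hG : G.Connected) (k : ℕ) (hk : 3 ≤ k)
    (hΔ : k ≤ G.maxDegree) :
    G.diam + k - 2 ≤ limPackNum G k := by
  have : Nonempty V := hG.nonempty
  obtain ⟨u, w, huw⟩ := G.exists_dist_eq_diam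
  obtain ⟨p, hp⟩ := hG.exists_walk_length_eq_dist u w
  have hL3 : G.diam + 1 ≤ limPackNum G 3 := by
    rw [← huw, ← hp, ← p.card_support_toFinset_of_length_eq_dist hp]
    exact (limPack_three_support_of_length_eq_dist p hp).card_le_limPackNum_s6
  have hLk := limPackNum_add_le (G := G) (k := 3) (j := k - 3) (by omega)
  rw [Nat.add_sub_cancel' hk] at hLk
  omega
end

section
/- If G is a graph containing a cycle and g(G) denotes its girth, then L_1(G) ≥ ⌊g(G)/3⌋. -/
open Finset

/-!
Let `c` be a shortest cycle, of length `g`, and take every third vertex `c₀, c₃, …` of it,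
`⌊g/3⌋` vertices in all. Two of them cut `c` into two arcs, each of length at least `3`. A path
of length at most `2` between them differs in length from either arc, and together with an arc
it would span a cycle shorter than `g`. So these vertices are pairwise at distance at least `3`,
and no closed neighbourhood contains two of them.
-/

namespace SimpleGraph

variable {V : Type*} {G : SimpleGraph V} {u w : V}

lemma girth_le_length_add_length {p q : G.Walk u w} (hp : p.IsPath) (hq : q.IsPath)
    (hpq : p.length ≠ q.length) : G.girth ≤ p.length + q.length := by
  -- The edges of `p` and `q` span a subgraph with two distinct `u`-`w` paths, hence with a
  -- cycle, and a cycle uses each of these edges at most once.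
  let H : SimpleGraph V := fromEdgeSet {e | e ∈ p.edges ++ q.edges}
  have hHG : H ≤ G := fun x y hxy => by
    obtain ⟨he, -⟩ := (fromEdgeSet_adj _).mp hxy
    rcases List.mem_append.mp he with he | he
    exacts [p.edges_subset_edgeSet he, q.edges_subset_edgeSet he]
  have hsub : ∀ {r : G.Walk u w}, (∀ e ∈ r.edges, e ∈ p.edges ++ q.edges) →
      ∀ e ∈ r.edges, e ∈ H.edgeSet := fun hr e he => by
    rw [edgeSet_fromEdgeSet]
    exact ⟨hr e he, G.not_isDiag_of_mem_edgeSet (Walk.edges_subset_edgeSet _ he)⟩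
  have hH : ¬ H.IsAcyclic := fun hac => hpq <| by
    have := (hac.subsingleton_path u w).elim
      ⟨p.transfer H (hsub fun e he => List.mem_append_left _ he), hp.transfer _⟩
      ⟨q.transfer H (hsub fun e he => List.mem_append_right _ he), hq.transfer _⟩
    simpa only [Walk.length_transfer] using congrArg (fun r : H.Path u w => r.1.length) this
  obtain ⟨a, c, hc, hcg⟩ := exists_girth_eq_length.mpr hH
  have hcedges : c.edges.Subperm (p.edges ++ q.edges) :=
    List.subperm_of_subset hc.edges_nodup fun e he => by
      have := c.edges_subset_edgeSet he
      rw [edgeSet_fromEdgeSet] at this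
      exact this.1
  have hclen := hcedges.length_le
  simp only [Walk.length_edges, List.length_append] at hclen
  have := girth_anti hHG hH
  omega

lemma Walk.IsPath.min_length_le_edist {q : G.Walk u w} (hq : q.IsPath) :
    ((min q.length (G.girth - q.length) : ℕ) : ℕ∞) ≤ G.edist u w := by
  classical
  obtain ⟨p, hp⟩ := q.reachable.exists_walk_length_eq_edist
  rw [← hp, Nat.cast_le]
  have hpq := p.length_bypass_le_length
  by_cases hlen : p.bypass.length = q.length
  · omega
  · have := girth_le_length_add_length p.bypass_isPath hq hlen
    omega

lemma Walk.IsCycle.min_le_edist_getVert {a : V} {c : G.Walk a a} (hc : c.IsCycle) {s t : ℕ}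
    (hst : s ≤ t) (ht : t < c.length) :
    ((min (t - s) (G.girth - (t - s)) : ℕ) : ℕ∞) ≤ G.edist (c.getVert s) (c.getVert t) := by
  have harc : ((c.take t).drop s).IsPath := (hc.isPath_take ht).drop s
  have hlen : ((c.take t).drop s).length = t - s := by
    rw [drop_length, take_length]
    omega
  have := harc.min_length_le_edist
  rwa [hlen, take_getVert, min_eq_right hst] at this

end SimpleGraph

open SimpleGraph

section Packing

variable {V : Type*} [Fintype V] [DecidableEq V] {G : SimpleGraph V} [DecidableRel G.Adj]

lemma limPack_one_of_two_lt_edist {B : Finset V}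
    (hB : ∀ x ∈ B, ∀ y ∈ B, x ≠ y → 2 < G.edist x y) : limPack G 1 B := by
  have hclose : ∀ {v x}, x ∈ insert v (G.neighborFinset v) → G.edist v x ≤ 1 := fun hx => by
    rw [edist_le_one_iff_adj_or_eq]
    rcases Finset.mem_insert.mp hx with rfl | hx
    exacts [Or.inr rfl, Or.inl ((G.mem_neighborFinset _ _).mp hx)]
  intro v
  refine Finset.card_le_one.mpr fun x hx y hy => by_contra fun hxy => ?_
  rw [Finset.mem_inter] at hx hy
  have hfar := (hB x hx.2 y hy.2 hxy).trans_le (G.edist_triangle (v := v))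
  rw [edist_comm] at hfar
  exact hfar.not_ge ((add_le_add (hclose hx.1) (hclose hy.1)).trans_eq one_add_one_eq_two)

lemma le_limPackNum {k : ℕ} {B : Finset V} (hB : limPack G k B) : B.card ≤ limPackNum G k :=
  le_csSup ⟨Fintype.card V, by rintro n ⟨B', -, rfl⟩; exact B'.card_le_univ⟩ ⟨B, hB, rfl⟩

end Packing

theorem stmt_7 {V : Type*} [Fintype V] [DecidableEq V] (G : SimpleGraph V)
    [DecidableRel G.Adj] (hG : ¬ G.IsAcyclic) :
    G.girth / 3 ≤ limPackNum G 1 := by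
  obtain ⟨a, c, hc, hgirth⟩ := exists_girth_eq_length.mpr hG
  have hfar : ∀ i j, i < j → j < G.girth / 3 →
      2 < G.edist (c.getVert (3 * i)) (c.getVert (3 * j)) := fun i j hij hj =>
    lt_of_lt_of_le (by norm_cast; omega) (hc.min_le_edist_getVert (by omega) (by omega))
  have hinj : Set.InjOn (fun i => c.getVert (3 * i)) (range (G.girth / 3)) :=
    fun i hi j hj hij => by
      simp only [coe_range, Set.mem_Iio] at hi hj
      have := hc.getVert_injOn' (show 3 * i ≤ c.length - 1 by omega)
        (show 3 * j ≤ c.length - 1 by omega) hij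
      omega
  calc G.girth / 3 = ((range (G.girth / 3)).image fun i => c.getVert (3 * i)).card := by
        rw [card_image_of_injOn hinj, card_range]
    _ ≤ limPackNum G 1 := le_limPackNum <| limPack_one_of_two_lt_edist <| by
        simp only [mem_image, mem_range]
        rintro _ ⟨i, hi, rfl⟩ _ ⟨j, hj, rfl⟩ hne
        rcases lt_trichotomy i j with h | rfl | h
        exacts [hfar i j h hj, absurd rfl hne, edist_comm ▸ hfar j i h hi]
end

section
/- Let G be a d-regular graph of order n with k ≤ d such that L_k(G) = n + k − 1 − d. Then d ≥ n/2. -/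
open Finset

theorem stmt_11 {V : Type*} [Fintype V] [DecidableEq V] (G : SimpleGraph V)
    [DecidableRel G.Adj] (d k : ℕ) (hk : 1 ≤ k) (hkd : k ≤ d)
    (hreg : G.IsRegularOfDegree d)
    (hL : limPackNum G k = Fintype.card V + k - 1 - d) :
    Fintype.card V ≤ 2 * d := by
  classical
  set n := Fintype.card V with hn
  by_cases hV : IsEmpty V
  · have : n = 0 := Fintype.card_eq_zero
    omega
  rw [not_isEmpty_iff] at hV
  obtain ⟨v0⟩ := hV
  have hd : d < n := by
    have h1 := hreg v0
    have h2 := G.degree_lt_card_verts v0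
    omega
  have hmem : limPackNum G k ∈ {m | ∃ B : Finset V, limPack G k B ∧ B.card = m} := by
    apply Nat.sSup_mem
    · exact ⟨0, ∅, fun v => by simp, rfl⟩
    · exact ⟨n, fun m ⟨B, _, hB⟩ => hB ▸ B.card_le_univ⟩
  obtain ⟨B, hBpack, hBcard⟩ := hmem
  rw [hL] at hBcard
  -- double counting
  have key : B.card * (d + 1) ≤ k * n := by
    have h1 : ∀ v : V, (insert v (G.neighborFinset v) ∩ B).card
        = ∑ b ∈ B, if v ∈ insert b (G.neighborFinset b) then 1 else 0 := by
      intro v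
      rw [Finset.inter_comm, ← Finset.filter_mem_eq_inter, Finset.card_filter]
      refine Finset.sum_congr rfl fun b _ => ?_
      congr 1
      simp only [Finset.mem_insert, SimpleGraph.mem_neighborFinset, eq_iff_iff]
      constructor
      · rintro (rfl | h)
        · exact Or.inl rfl
        · exact Or.inr h.symm
      · rintro (rfl | h)
        · exact Or.inl rfl
        · exact Or.inr h.symm
    have h2 : ∑ v : V, (insert v (G.neighborFinset v) ∩ B).card = B.card * (d + 1) := by
      calc ∑ v : V, (insert v (G.neighborFinset v) ∩ B).card
          = ∑ v : V, ∑ b ∈ B, if v ∈ insert b (G.neighborFinset b) then 1 else 0 := by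
            exact Finset.sum_congr rfl fun v _ => h1 v
        _ = ∑ b ∈ B, ∑ v : V, if v ∈ insert b (G.neighborFinset b) then 1 else 0 :=
            Finset.sum_comm
        _ = ∑ b ∈ B, (insert b (G.neighborFinset b)).card := by
            refine Finset.sum_congr rfl fun b _ => ?_
            rw [Finset.card_eq_sum_ones, Finset.sum_ite_mem, Finset.univ_inter]
        _ = ∑ b ∈ B, (d + 1) := by
            refine Finset.sum_congr rfl fun b _ => ?_
            rw [Finset.card_insert_of_notMem (G.notMem_neighborFinset_self b)]
            rw [G.card_neighborFinset_eq_degree, hreg b]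
        _ = B.card * (d + 1) := by rw [Finset.sum_const, smul_eq_mul]
    have h3 : ∑ v : V, (insert v (G.neighborFinset v) ∩ B).card ≤ ∑ _v : V, k :=
      Finset.sum_le_sum fun v _ => hBpack v
    rw [h2] at h3
    simpa [mul_comm, hn] using h3
  -- arithmetic
  have hm : n = (n - (d + 1)) + (d + 1) := by omega
  have hBc : B.card = (n - (d + 1)) + k := by omega
  set m := n - (d + 1) with hmdef
  rw [hBc] at key
  rw [hm] at key
  have hm0 : m = 0 := by nlinarith
  omega
end

section
/- Let G be a graph of order n with k ≤ min{Δ(G), Δ(\overline{G})}. Then L_k(G) + L_k(\overline{G}) ≤ n + 2k − 2. -/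
open Finset

lemma closed_nbhd_card {V : Type*} [Fintype V] [DecidableEq V] (G : SimpleGraph V)
    [DecidableRel G.Adj] (v : V) :
    (insert v (G.neighborFinset v)).card = G.degree v + 1 := by
  rw [Finset.card_insert_of_notMem (G.notMem_neighborFinset_self v)]
  rfl

/-- Bound 1: any packing has card ≤ n + k − 1 − Δ. -/
lemma pack_bound1 {V : Type*} [Fintype V] [DecidableEq V] [Nonempty V] (G : SimpleGraph V)
    [DecidableRel G.Adj] (k : ℕ) (P : Finset V) (hP : limPack G k P) :
    P.card + G.maxDegree + 1 ≤ Fintype.card V + k := by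
  obtain ⟨v, hv⟩ := G.exists_maximal_degree_vertex
  have h1 : (P ∩ insert v (G.neighborFinset v)).card +
      (P \ insert v (G.neighborFinset v)).card = P.card :=
    Finset.card_inter_add_card_sdiff P _
  have h2 : (P ∩ insert v (G.neighborFinset v)).card ≤ k := by
    rw [Finset.inter_comm]; exact hP v
  have h3 : (P \ insert v (G.neighborFinset v)).card ≤
      Fintype.card V - (G.degree v + 1) := by
    have : P \ insert v (G.neighborFinset v) ⊆ univ \ insert v (G.neighborFinset v) :=
      Finset.sdiff_subset_sdiff (Finset.subset_univ P) le_rfl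
    calc (P \ insert v (G.neighborFinset v)).card
        ≤ (univ \ insert v (G.neighborFinset v)).card := Finset.card_le_card this
      _ = Fintype.card V - (G.degree v + 1) := by
          rw [Finset.card_sdiff_of_subset (Finset.subset_univ _), closed_nbhd_card]
          simp
  have h4 : G.degree v + 1 ≤ Fintype.card V := by
    have := G.degree_lt_card_verts v; omega
  omega

/-- Bound 2: counting. -/
lemma pack_bound2 {V : Type*} [Fintype V] [DecidableEq V] (G : SimpleGraph V)
    [DecidableRel G.Adj] (k : ℕ) (P : Finset V) (hP : limPack G k P) :
    ∑ u ∈ P, (G.degree u + 1) ≤ k * Fintype.card V := by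
  have key : ∀ u v : V, (u ∈ insert v (G.neighborFinset v)) ↔
      (v ∈ insert u (G.neighborFinset u)) := by
    intro u v
    simp [SimpleGraph.mem_neighborFinset, eq_comm, SimpleGraph.adj_comm]
  calc ∑ u ∈ P, (G.degree u + 1)
      = ∑ u ∈ P, (insert u (G.neighborFinset u)).card := by
        simp [closed_nbhd_card]
    _ = ∑ u ∈ P, ∑ v ∈ univ, (if v ∈ insert u (G.neighborFinset u) then 1 else 0) := by
        refine Finset.sum_congr rfl fun u _ => ?_
        rw [← Finset.card_filter]
        congr 1
        ext v
        simp
    _ = ∑ v ∈ univ, ∑ u ∈ P, (if u ∈ insert v (G.neighborFinset v) then 1 else 0) := by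
        rw [Finset.sum_comm]
        refine Finset.sum_congr rfl fun v _ => Finset.sum_congr rfl fun u _ => ?_
        simp only [key u v]
    _ = ∑ v ∈ univ, (insert v (G.neighborFinset v) ∩ P).card := by
        refine Finset.sum_congr rfl fun v _ => ?_
        rw [← Finset.card_filter, Finset.filter_mem_eq_inter, Finset.inter_comm]
    _ ≤ ∑ v ∈ univ, k := Finset.sum_le_sum fun v _ => hP v
    _ = k * Fintype.card V := by simp [mul_comm]

lemma limPackNum_mem {V : Type*} [Fintype V] [DecidableEq V] (G : SimpleGraph V)
    [DecidableRel G.Adj] (k : ℕ) :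
    ∃ B : Finset V, limPack G k B ∧ B.card = limPackNum G k := by
  have hne : {n | ∃ B : Finset V, limPack G k B ∧ B.card = n}.Nonempty :=
    ⟨0, ∅, fun v => by simp, by simp⟩
  have hbdd : BddAbove {n | ∃ B : Finset V, limPack G k B ∧ B.card = n} := by
    refine ⟨Fintype.card V, fun n hn => ?_⟩
    obtain ⟨B, _, hB⟩ := hn
    exact hB ▸ B.card_le_univ
  exact Nat.sSup_mem hne hbdd

theorem stmt_13 {V : Type*} [Fintype V] [DecidableEq V] (G : SimpleGraph V)
    [DecidableRel G.Adj] (k : ℕ) (hk : 1 ≤ k)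
    (h1 : k ≤ G.maxDegree) (h2 : k ≤ Gᶜ.maxDegree) :
    limPackNum G k + limPackNum Gᶜ k ≤ Fintype.card V + 2 * k - 2 := by
  by_contra hcon
  push_neg at hcon
  -- V is nonempty
  have hNe : Nonempty V := by
    by_contra h
    rw [not_nonempty_iff] at h
    have : G.maxDegree = 0 := by
      simp [SimpleGraph.maxDegree, Finset.univ_eq_empty]
    omega
  set n := Fintype.card V with hn
  set a := G.maxDegree with ha
  set b := Gᶜ.maxDegree with hb
  obtain ⟨P, hPpack, hPcard⟩ := limPackNum_mem G k
  obtain ⟨Q, hQpack, hQcard⟩ := limPackNum_mem Gᶜ k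
  have B1 : P.card + a + 1 ≤ n + k := pack_bound1 G k P hPpack
  have B1' : Q.card + b + 1 ≤ n + k := pack_bound1 Gᶜ k Q hQpack
  -- b ≥ n - 1 - a : vertex of max degree in G
  obtain ⟨v, hv⟩ := G.exists_maximal_degree_vertex
  have hdc : Gᶜ.degree v = n - 1 - G.degree v := SimpleGraph.degree_compl ..
  have hvb : Gᶜ.degree v ≤ b := Gᶜ.degree_le_maxDegree v
  have hvn : G.degree v < n := G.degree_lt_card_verts v
  have hab : n ≤ a + b + 1 := by omega
  -- from the contradiction hypothesis: P.card ≥ k + b ≥ k + (n-1-a)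
  have hPQ : n + 2 * k - 1 ≤ P.card + Q.card := by
    rw [hPcard, hQcard]; omega
  have hPbig : k + (n - 1 - a) ≤ P.card := by omega
  -- counting bound on G: every vertex has G-degree ≥ n - 1 - b
  have hdegs : ∀ u : V, n - 1 - b ≤ G.degree u := by
    intro u
    have h' : Gᶜ.degree u = n - 1 - G.degree u := SimpleGraph.degree_compl ..
    have := Gᶜ.degree_le_maxDegree u
    have := G.degree_lt_card_verts u
    omega
  have hcount : P.card * (n - b) ≤ k * n := by
    calc P.card * (n - b) = ∑ _u ∈ P, (n - b) := by
          rw [Finset.sum_const, smul_eq_mul, mul_comm]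
      _ ≤ ∑ u ∈ P, (G.degree u + 1) := Finset.sum_le_sum fun u _ => by
          have := hdegs u; omega
      _ ≤ k * n := pack_bound2 G k P hPpack
  -- now pure arithmetic; note a + b ≤ n - 1 from B1, B1', hPQ
  have habu : a + b + 1 ≤ n := by omega
  -- so n - b = a + 1 and n - 1 - a = b
  have h5 : n - b = a + 1 := by omega
  have h6 : n - 1 - a = b := by omega
  rw [h5] at hcount
  rw [h6] at hPbig
  have hge : (k + b) * (a + 1) ≤ P.card * (a + 1) :=
    Nat.mul_le_mul_right _ hPbig
  have : (k + b) * (a + 1) ≤ k * n := le_trans hge hcount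
  nlinarith [this, habu, h1, h2, hk]
end

section
/- If G is a connected graph of diameter 2 that has a cut vertex, then G contains a vertex adjacent to all other vertices (i.e., Δ(G) = |V(G)| − 1), and consequently L_2(G) = 2. -/
open Finset

/-- If `x, y ≠ v` are not reachable in `G - v`, then `v` is adjacent to `x`. -/
lemma key {V : Type*} [Fintype V] [DecidableEq V] (G : SimpleGraph V) [DecidableRel G.Adj]
    (hG : G.Connected) (hdiam : G.diam = 2) (v : V) {x y : V}
    (hx : x ∈ ({v}ᶜ : Set V)) (hy : y ∈ ({v}ᶜ : Set V))
    (hnr : ¬ (G.induce ({v}ᶜ : Set V)).Reachable ⟨x, hx⟩ ⟨y, hy⟩) :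
    G.Adj v x := by
  have hxy : x ≠ y := by
    rintro rfl
    exact hnr (SimpleGraph.Reachable.refl _)
  have hetop : G.ediam ≠ ⊤ := by
    intro h
    rw [SimpleGraph.diam, h] at hdiam
    simp at hdiam
  have hle : G.dist x y ≤ 2 := hdiam ▸ SimpleGraph.dist_le_diam hetop
  have hnadj : ¬ G.Adj x y := by
    intro h
    exact hnr (SimpleGraph.Adj.reachable (by simpa using h))
  have hpos : G.dist x y ≠ 0 := (hG.pos_dist_of_ne hxy).ne'
  have hne1 : G.dist x y ≠ 1 := fun h => hnadj (SimpleGraph.dist_eq_one_iff_adj.mp h)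
  have hdist : G.dist x y = 2 := by omega
  obtain ⟨p, hp⟩ := (hG.preconnected x y).exists_walk_length_eq_dist
  rw [hdist] at hp
  cases p with
  | nil => simp at hp
  | cons h q =>
    cases q with
    | nil => simp at hp
    | cons h' q' =>
      cases q' with
      | nil =>
        rename_i m
        by_cases hm : m = v
        · subst hm; exact h.symm
        · exfalso
          apply hnr
          have ha : (G.induce ({v}ᶜ : Set V)).Adj ⟨x, hx⟩ ⟨m, hm⟩ := by simpa using h
          have hb : (G.induce ({v}ᶜ : Set V)).Adj ⟨m, hm⟩ ⟨y, hy⟩ := by simpa using h'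
          exact ha.reachable.trans hb.reachable
      | cons h'' q'' => simp at hp

theorem stmt_16 {V : Type*} [Fintype V] [DecidableEq V] (G : SimpleGraph V)
    [DecidableRel G.Adj] (hG : G.Connected) (hdiam : G.diam = 2)
    (v : V) (hcut : ¬ (G.induce ({v}ᶜ : Set V)).Connected) :
    (∃ u : V, ∀ w : V, w ≠ u → G.Adj u w) ∧ limPackNum G 2 = 2 := by
  have hnt : Nontrivial V := by
    rcases subsingleton_or_nontrivial V with h | h
    · exfalso
      have : G.ediam = 0 := SimpleGraph.ediam_eq_zero_of_subsingleton
      rw [SimpleGraph.diam, this] at hdiam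
      simp at hdiam
    · exact h
  obtain ⟨w0, hw0⟩ := exists_ne v
  have hne : Nonempty ({v}ᶜ : Set V) := ⟨⟨w0, hw0⟩⟩
  have hpre : ¬ (G.induce ({v}ᶜ : Set V)).Preconnected := by
    intro hp
    exact hcut ⟨hp⟩
  rw [SimpleGraph.Preconnected] at hpre
  push_neg at hpre
  obtain ⟨a, b, hab⟩ := hpre
  -- `v` is a universal vertex
  have huniv : ∀ w : V, w ≠ v → G.Adj v w := by
    intro w hw
    have hwmem : w ∈ ({v}ᶜ : Set V) := hw
    by_cases hra : (G.induce ({v}ᶜ : Set V)).Reachable ⟨w, hwmem⟩ a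
    · by_cases hrb : (G.induce ({v}ᶜ : Set V)).Reachable ⟨w, hwmem⟩ b
      · exact absurd (hra.symm.trans hrb) hab
      · obtain ⟨b', hb'⟩ := b
        exact key G hG hdiam v hwmem hb' hrb
    · obtain ⟨a', ha'⟩ := a
      exact key G hG hdiam v hwmem ha' hra
  refine ⟨⟨v, fun w hw => huniv w hw⟩, ?_⟩
  -- the closed neighbourhood of `v` is everything
  have hNv : insert v (G.neighborFinset v) = Finset.univ := by
    ext w
    simp only [Finset.mem_insert, SimpleGraph.mem_neighborFinset, Finset.mem_univ, iff_true]
    by_cases h : w = v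
    · exact Or.inl h
    · exact Or.inr (huniv w h)
  have hub : ∀ n ∈ {n | ∃ B : Finset V, limPack G 2 B ∧ B.card = n}, n ≤ 2 := by
    rintro n ⟨B, hB, rfl⟩
    have := hB v
    rwa [hNv, Finset.univ_inter] at this
  have hmem : 2 ∈ {n | ∃ B : Finset V, limPack G 2 B ∧ B.card = n} := by
    refine ⟨{v, w0}, ?_, ?_⟩
    · intro u
      calc (insert u (G.neighborFinset u) ∩ {v, w0}).card
          ≤ ({v, w0} : Finset V).card := Finset.card_le_card (Finset.inter_subset_right)
        _ ≤ 2 := Finset.card_insert_le _ _ |>.trans (by simp)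
    · rw [Finset.card_insert_of_notMem (by simpa using hw0.symm), Finset.card_singleton]
  refine le_antisymm (csSup_le ⟨0, ⟨∅, ?_, by simp⟩⟩ hub) (le_csSup ⟨2, hub⟩ hmem)
  intro u; simp [limPack]
end

section
/- For every integer a ≥ 2 there exists a graph G of diameter 2 with L_2(G) = a. In particular, the graph G with vertex set X ∪ Y, where |X| = a, Y is a clique on a(a−1)/2 vertices, X is an independent set, and each pair of distinct vertices of X has exactly one common neighbour in Y (each vertex of Y joined to exactly one pair from X), satisfies diam(G) = 2 and L_2(G) = a. -/
/-!
The vertices of `X` form a 2-limited packing: a vertex of `X` sees no other vertex of `X`, and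
the vertex of `Y` labelled `{x, y}` sees exactly `x` and `y` in `X`. Conversely, the closed
neighbourhood of a vertex `{x, y}` of `Y` misses only the `a - 2` vertices of `X \ {x, y}` and
holds at most two vertices of a packing, so no packing has more than `a` vertices. The diameter
is 2 because two distinct vertices of `X` are non-adjacent, and any two non-adjacent vertices have
a common neighbour in `Y`.
-/

open Finset

namespace SimpleGraph

variable {V : Type*} (G : SimpleGraph V)

lemma diam_eq_two_of_commonNeighbors_nonempty
    (hcommon : ∀ u v, u ≠ v → ¬ G.Adj u v → (G.commonNeighbors u v).Nonempty)
    {u₀ v₀ : V} (hne : u₀ ≠ v₀) (hnadj : ¬ G.Adj u₀ v₀) : G.diam = 2 := by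
  have hediam : G.ediam = 2 := by
    refine le_antisymm (ediam_le_of_edist_le fun u v => ?_) ?_
    · by_cases huv : u = v
      · simp [huv]
      by_cases hadj : G.Adj u v
      · simp [edist_eq_one_iff_adj.mpr hadj]
      · exact (edist_eq_two_iff.mpr ⟨huv, hadj, hcommon u v huv hadj⟩).le
    · exact (edist_eq_two_iff.mpr ⟨hne, hnadj, hcommon u₀ v₀ hne hnadj⟩).ge.trans edist_le_ediam
  rw [diam, hediam]
  rfl

end SimpleGraph

section LimitedPacking

variable {V : Type*} [Fintype V] [DecidableEq V] {G : SimpleGraph V} [DecidableRel G.Adj]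
  {k : ℕ} {B : Finset V}

lemma limPack.card_le_add_card_compl (hB : limPack G k B) (v : V) :
    B.card ≤ k + (insert v (G.neighborFinset v))ᶜ.card := by
  set N := insert v (G.neighborFinset v)
  calc B.card = (N ∩ B).card + (B \ N).card := by
        rw [inter_comm, card_inter_add_card_sdiff]
    _ ≤ k + Nᶜ.card := by
        gcongr
        · exact hB v
        · exact fun u hu => mem_compl.mpr (mem_sdiff.mp hu).2

lemma limPack.limPackNum_eq_card (hB : limPack G k B)
    (hmax : ∀ B' : Finset V, limPack G k B' → B'.card ≤ B.card) : limPackNum G k = B.card :=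
  IsGreatest.csSup_eq ⟨⟨B, hB, rfl⟩, by rintro _ ⟨B', hB', rfl⟩; exact hmax B' hB'⟩

end LimitedPacking

variable (α : Type*)

/-- Here `X = α` and `Y` is indexed by the unordered pairs of distinct elements of `α`, the vertex
`p` of `Y` being the common neighbour in `X` of the two elements of `p`. -/
def pairCliqueGraph : SimpleGraph (α ⊕ {p : Sym2 α // ¬ p.IsDiag}) where
  Adj
    | .inl _, .inl _ => False
    | .inl x, .inr p | .inr p, .inl x => x ∈ p.1
    | .inr p, .inr q => p ≠ q
  symm := ⟨by
    rintro (x | p) (y | q) h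
    exacts [h, h, h, Ne.symm h]⟩
  loopless := ⟨by
    rintro (x | p) h
    exacts [h, h rfl]⟩

namespace pairCliqueGraph

variable {α}

@[simp] lemma adj_inl_inl (x y : α) : ¬ (pairCliqueGraph α).Adj (.inl x) (.inl y) := id

@[simp] lemma adj_inl_inr (x : α) (p : {p : Sym2 α // ¬ p.IsDiag}) :
    (pairCliqueGraph α).Adj (.inl x) (.inr p) ↔ x ∈ p.1 := Iff.rfl

@[simp] lemma adj_inr_inl (x : α) (p : {p : Sym2 α // ¬ p.IsDiag}) :
    (pairCliqueGraph α).Adj (.inr p) (.inl x) ↔ x ∈ p.1 := Iff.rfl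

@[simp] lemma adj_inr_inr (p q : {p : Sym2 α // ¬ p.IsDiag}) :
    (pairCliqueGraph α).Adj (.inr p) (.inr q) ↔ p ≠ q := Iff.rfl

instance [DecidableEq α] : DecidableRel (pairCliqueGraph α).Adj
  | .inl _, .inl _ => inferInstanceAs (Decidable False)
  | .inl x, .inr p => decidable_of_iff _ (adj_inl_inr x p).symm
  | .inr p, .inl x => decidable_of_iff _ (adj_inr_inl x p).symm
  | .inr p, .inr q => decidable_of_iff _ (adj_inr_inr p q).symm

lemma commonNeighbors_inl_inr_nonempty [Nontrivial α] {x : α} {q : {p : Sym2 α // ¬ p.IsDiag}}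
    (hx : x ∉ q.1) : ((pairCliqueGraph α).commonNeighbors (.inl x) (.inr q)).Nonempty := by
  obtain ⟨z, hz⟩ := exists_ne x
  refine ⟨.inr ⟨s(x, z), by simpa using hz.symm⟩, ?_⟩
  simp only [SimpleGraph.mem_commonNeighbors, adj_inl_inr, adj_inr_inr]
  exact ⟨Sym2.mem_mk_left x z, fun h => hx (h ▸ Sym2.mem_mk_left x z)⟩

lemma commonNeighbors_nonempty [Nontrivial α] (u v : α ⊕ {p : Sym2 α // ¬ p.IsDiag})
    (huv : u ≠ v) (hnadj : ¬ (pairCliqueGraph α).Adj u v) :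
    ((pairCliqueGraph α).commonNeighbors u v).Nonempty := by
  rcases u with x | p <;> rcases v with y | q
  · have hxy : x ≠ y := fun h => huv (h ▸ rfl)
    exact ⟨.inr ⟨s(x, y), by simpa using hxy⟩, by simp [SimpleGraph.mem_commonNeighbors]⟩
  · exact commonNeighbors_inl_inr_nonempty hnadj
  · rw [SimpleGraph.commonNeighbors_symm]
    exact commonNeighbors_inl_inr_nonempty hnadj
  · exact absurd ((adj_inr_inr p q).mpr fun h => huv (h ▸ rfl)) hnadj

lemma diam_eq_two [Nontrivial α] : (pairCliqueGraph α).diam = 2 := by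
  obtain ⟨x, y, hxy⟩ := exists_pair_ne α
  exact SimpleGraph.diam_eq_two_of_commonNeighbors_nonempty _ commonNeighbors_nonempty
    (Sum.inl_injective.ne hxy) (adj_inl_inl x y)

variable [Fintype α] [DecidableEq α]

lemma limPack_map_inl : limPack (pairCliqueGraph α) 2 (univ.map .inl) := by
  rintro (x | ⟨p, hp⟩)
  · calc _ ≤ ({.inl x} : Finset _).card := card_le_card fun u hu => by
          obtain rfl | ⟨hadj, y, rfl⟩ := by simpa using hu
          · exact mem_singleton_self _
          · exact absurd hadj (adj_inl_inl x y)
      _ ≤ 2 := by simp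
  · induction p using Sym2.ind with | h x y =>
    calc _ ≤ ({.inl x, .inl y} : Finset _).card := card_le_card fun u hu => by
          obtain ⟨hadj, z, -, rfl⟩ := by simpa using hu
          simpa using hadj
      _ ≤ 2 := card_le_two

lemma compl_closedNeighborFinset_inr_subset {x y : α} (hxy : x ≠ y) :
    (insert (.inr ⟨s(x, y), by simpa using hxy⟩)
      ((pairCliqueGraph α).neighborFinset (.inr ⟨s(x, y), by simpa using hxy⟩)))ᶜ ⊆
      ({x, y}ᶜ : Finset α).map .inl := by
  rintro (z | q) hz
  · simp_all
  · by_cases h : q = ⟨s(x, y), by simpa using hxy⟩ <;> simp_all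

lemma limPackNum_eq_card [Nontrivial α] : limPackNum (pairCliqueGraph α) 2 = Fintype.card α := by
  obtain ⟨x, y, hxy⟩ := exists_pair_ne α
  have htwo : 2 ≤ Fintype.card α := Fintype.one_lt_card
  rw [← card_univ, ← card_map .inl]
  refine limPack_map_inl.limPackNum_eq_card fun B hB => ?_
  calc B.card ≤ 2 + _ := hB.card_le_add_card_compl (.inr ⟨s(x, y), by simpa using hxy⟩)
    _ ≤ 2 + (({x, y}ᶜ : Finset α).map .inl).card := by
        gcongr; exact compl_closedNeighborFinset_inr_subset hxy
    _ = (univ.map .inl).card := by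
        simp only [card_map, card_compl, card_pair hxy, card_univ]
        omega

end pairCliqueGraph

theorem stmt_17 (a : ℕ) (ha : 2 ≤ a) :
    ∃ (V : Type) (_ : Fintype V) (_ : DecidableEq V) (G : SimpleGraph V)
      (_ : DecidableRel G.Adj), G.diam = 2 ∧ limPackNum G 2 = a := by
  have : Nontrivial (Fin a) := Fin.nontrivial_iff_two_le.mpr ha
  refine ⟨_, inferInstance, inferInstance, pairCliqueGraph (Fin a), inferInstance,
    pairCliqueGraph.diam_eq_two, ?_⟩
  rw [pairCliqueGraph.limPackNum_eq_card, Fintype.card_fin]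
end

section
/- For any graph G, every open packing of G is a 2-limited packing; hence ρ⁰(G) ≤ L_2(G). Moreover, for any tree T of order at least 2, L_2(T) ≤ 2ρ⁰(T). -/
open Finset

/-- `S` is an open packing: every open neighbourhood contains at most one vertex of `S`. -/
def openPack {V : Type*} [Fintype V] [DecidableEq V] (G : SimpleGraph V)
    [DecidableRel G.Adj] (S : Finset V) : Prop :=
  ∀ v : V, (G.neighborFinset v ∩ S).card ≤ 1

/-- The open packing number. -/
noncomputable def openPackNum {V : Type*} [Fintype V] [DecidableEq V] (G : SimpleGraph V)
    [DecidableRel G.Adj] : ℕ :=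
  sSup {n | ∃ S : Finset V, openPack G S ∧ S.card = n}

/-! An open packing meets a closed neighbourhood `N[v]` in at most `v` and one vertex of `N(v)`.
For trees, a 2-limited packing meets each `N[x]`, `x` in a dominating set `D`, at most twice, so
`L₂(T) ≤ 2|D|`. To find `D` together with an open packing `P` with `|D| ≤ |P|`, root the tree
at a vertex of a set `W` and take a deepest vertex `v` of `W`: the closed neighbourhood of its
parent `m` contains, within `W`, that of every closed neighbour of `v`. Putting `m` into `D`, `v`
into `P`, and recursing on `W \ N[m]` gives a dominating set and a set `P` with pairwise disjoint
closed neighbourhoods (a 2-packing, hence an open packing) of the same size. -/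

namespace SimpleGraph

variable {V : Type*} {G : SimpleGraph V}

lemma Connected.exists_adj_dist_eq_add_one (hG : G.Connected) {r v : V} (hv : v ≠ r) :
    ∃ p, G.Adj p v ∧ G.dist r v = G.dist r p + 1 := by
  obtain ⟨w, hw⟩ := hG.exists_walk_length_eq_dist v r
  cases w with
  | nil => exact absurd rfl hv
  | @cons _ p _ hadj q =>
    refine ⟨p, hadj.symm, ?_⟩
    have hq : G.dist p r ≤ q.length := dist_le q
    have htri := hadj.diff_dist_adj (u := r)
    rw [Walk.length_cons] at hw
    rw [dist_comm (u := r) (v := v), dist_comm (u := r) (v := p)] at htri ⊢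
    omega

lemma IsAcyclic.eq_penultimate_of_dist_eq_add_one (hG : G.IsAcyclic) {r v a : V}
    {q : G.Walk r v} (hq : q.IsPath) (hadj : G.Adj a v) (hd : G.dist r v = G.dist r a + 1) :
    a = q.penultimate := by
  obtain ⟨p, hp, hplen⟩ := (q.reachable.trans hadj.symm.reachable).exists_path_of_dist
  refine hG.eq_penultimate_of_adj_end hq hadj.symm ?_
  by_contra ha
  have hvp := hG.mem_support_of_ne_mem_support_of_adj_of_isPath hp hq hadj ha
  have hlen := congrArg Walk.length (hG.path_concat hq hp hadj.symm hvp)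
  rw [Walk.length_concat, hplen] at hlen
  have := dist_le q
  omega

lemma IsTree.eq_of_adj_of_dist_eq_add_one (hG : G.IsTree) {r v a b : V} (ha : G.Adj a v)
    (hb : G.Adj b v) (hda : G.dist r v = G.dist r a + 1) (hdb : G.dist r v = G.dist r b + 1) :
    a = b := by
  obtain ⟨q, hq, -⟩ := hG.connected.exists_path_of_dist r v
  rw [hG.isAcyclic.eq_penultimate_of_dist_eq_add_one hq ha hda,
    hG.isAcyclic.eq_penultimate_of_dist_eq_add_one hq hb hdb]

variable [Fintype V] [DecidableEq V] [DecidableRel G.Adj]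

def closedNbhd (G : SimpleGraph V) [DecidableRel G.Adj] (v : V) : Finset V :=
  insert v (G.neighborFinset v)

lemma mem_closedNbhd {v w : V} : w ∈ G.closedNbhd v ↔ w = v ∨ G.Adj v w := by
  simp [closedNbhd]

lemma mem_closedNbhd_comm {v w : V} : w ∈ G.closedNbhd v ↔ v ∈ G.closedNbhd w := by
  simp only [mem_closedNbhd, eq_comm, G.adj_comm]

/-- A hereditary form of the maximum-neighbour condition defining dually chordal graphs. -/
def HasMaximumNeighbours (G : SimpleGraph V) [DecidableRel G.Adj] : Prop :=
  ∀ W : Finset V, W.Nonempty → ∃ v ∈ W, ∃ m ∈ G.closedNbhd v,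
    ∀ x ∈ G.closedNbhd v, G.closedNbhd x ∩ W ⊆ G.closedNbhd m

theorem HasMaximumNeighbours.exists_dominating_packing (hG : G.HasMaximumNeighbours)
    (W : Finset V) :
    ∃ D P : Finset V, P ⊆ W ∧ (∀ w ∈ W, ∃ x ∈ D, w ∈ G.closedNbhd x) ∧
      (P : Set V).PairwiseDisjoint G.closedNbhd ∧
      D.card ≤ P.card := by
  induction W using Finset.strongInduction with
  | H W ih =>
  rcases W.eq_empty_or_nonempty with rfl | hW
  · exact ⟨∅, ∅, by simp⟩
  obtain ⟨v, hvW, m, hm, hmax⟩ := hG W hW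
  have hvm : v ∈ G.closedNbhd m := mem_closedNbhd_comm.1 hm
  obtain ⟨D, P, hPW, hD, hP, hDP⟩ :=
    ih (W.filter (· ∉ G.closedNbhd m)) (filter_ssubset.2 ⟨v, hvW, not_not.2 hvm⟩)
  have hvP : v ∉ P := fun h => (mem_filter.1 (hPW h)).2 hvm
  refine ⟨insert m D, insert v P, ?_, ?_, ?_, ?_⟩
  · exact insert_subset hvW (hPW.trans (filter_subset _ _))
  · intro w hw
    by_cases hwm : w ∈ G.closedNbhd m
    · exact ⟨m, mem_insert_self _ _, hwm⟩
    · obtain ⟨x, hx, hwx⟩ := hD w (mem_filter.2 ⟨hw, hwm⟩)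
      exact ⟨x, mem_insert_of_mem hx, hwx⟩
  · rw [coe_insert]
    refine hP.insert fun q hq _ => Finset.disjoint_left.2 fun x hxv hxq => ?_
    have hqW := mem_filter.1 (hPW hq)
    exact hqW.2 (hmax x hxv (mem_inter.2 ⟨mem_closedNbhd_comm.1 hxq, hqW.1⟩))
  · rw [card_insert_of_notMem hvP]
    exact (card_insert_le _ _).trans (by omega)

theorem IsTree.hasMaximumNeighbours (hT : G.IsTree) : G.HasMaximumNeighbours := by
  intro W ⟨r, hrW⟩
  obtain ⟨v, hvW, hvmax⟩ := W.exists_max_image (G.dist r) ⟨r, hrW⟩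
  have step {a b : V} (hab : G.Adj a b) :
      G.dist r a = G.dist r b + 1 ∨ G.dist r b = G.dist r a + 1 :=
    hT.dist_eq_dist_add_one_of_adj r hab
  by_cases hvr : v = r
  · subst hvr
    refine ⟨v, hvW, v, mem_closedNbhd.2 (Or.inl rfl),
      fun x _ w hw => mem_closedNbhd.2 (Or.inl ?_)⟩
    have hw0 := hvmax w (mem_inter.1 hw).2
    rw [dist_self, Nat.le_zero, hT.connected.dist_eq_zero_iff] at hw0
    exact hw0.symm
  obtain ⟨p, hpv, hp⟩ := hT.connected.exists_adj_dist_eq_add_one hvr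
  refine ⟨v, hvW, p, mem_closedNbhd.2 (Or.inr hpv.symm), fun x hx w hw => ?_⟩
  rw [mem_inter, mem_closedNbhd] at hw
  have hwv := hvmax w hw.2
  rw [mem_closedNbhd] at hx ⊢
  -- `p` is the parent of `v`; a child `x` of `v` has no neighbour in `W` other than `v`.
  rcases hx with rfl | hvx
  · rcases hw.1 with rfl | hxw
    · exact Or.inr hpv
    · left
      exact hT.eq_of_adj_of_dist_eq_add_one hxw.symm hpv (by have := step hxw; omega) hp
  · rcases step hvx with hv | hx
    · obtain rfl := hT.eq_of_adj_of_dist_eq_add_one hvx.symm hpv hv hp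
      exact hw.1
    · rcases hw.1 with rfl | hxw
      · omega
      · right
        rw [hT.eq_of_adj_of_dist_eq_add_one hxw.symm hvx (by have := step hxw; omega) hx]
        exact hpv

end SimpleGraph

lemma sSup_card_le {V : Type*} {p : Finset V → Prop} {n : ℕ} (h : ∀ t, p t → t.card ≤ n) :
    sSup {n | ∃ t, p t ∧ t.card = n} ≤ n :=
  csSup_le' <| by rintro _ ⟨t, ht, rfl⟩; exact h t ht

lemma card_le_sSup_card {V : Type*} [Fintype V] {p : Finset V → Prop} {s : Finset V}
    (hs : p s) : s.card ≤ sSup {n | ∃ t, p t ∧ t.card = n} :=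
  le_csSup ⟨Fintype.card V, by rintro _ ⟨t, -, rfl⟩; exact card_le_univ t⟩ ⟨s, hs, rfl⟩

section Packing

variable {V : Type*} [Fintype V] [DecidableEq V] {G : SimpleGraph V} [DecidableRel G.Adj]

lemma limPack_two_of_openPack {S : Finset V} (hS : openPack G S) : limPack G 2 S := fun v =>
  calc (insert v (G.neighborFinset v) ∩ S).card
      ≤ (insert v (G.neighborFinset v ∩ S)).card := by
        rw [insert_inter_distrib]
        exact card_le_card (inter_subset_inter subset_rfl (subset_insert _ _))
    _ ≤ (G.neighborFinset v ∩ S).card + 1 := card_insert_le _ _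
    _ ≤ 2 := by have := hS v; omega

lemma openPackNum_le_limPackNum_two : openPackNum G ≤ limPackNum G 2 :=
  sSup_card_le fun _ hS => card_le_sSup_card (limPack_two_of_openPack hS)

lemma openPack_of_pairwiseDisjoint_closedNbhd {P : Finset V}
    (hP : (P : Set V).PairwiseDisjoint G.closedNbhd) : openPack G P := fun v =>
  card_le_one.2 fun p hp q hq => by
    by_contra hpq
    rw [mem_inter, SimpleGraph.mem_neighborFinset] at hp hq
    exact Finset.disjoint_left.1 (hP hp.2 hq.2 hpq)
      (SimpleGraph.mem_closedNbhd.2 (Or.inr hp.1.symm))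
      (SimpleGraph.mem_closedNbhd.2 (Or.inr hq.1.symm))

lemma card_le_mul_card_of_limPack {k : ℕ} {B D : Finset V} (hB : limPack G k B)
    (hD : ∀ v, ∃ x ∈ D, v ∈ G.closedNbhd x) : B.card ≤ k * D.card :=
  calc B.card ≤ (D.biUnion fun x => G.closedNbhd x ∩ B).card := card_le_card fun b hb => by
        obtain ⟨x, hx, hbx⟩ := hD b
        exact mem_biUnion.2 ⟨x, hx, mem_inter.2 ⟨hbx, hb⟩⟩
    _ ≤ ∑ x ∈ D, (G.closedNbhd x ∩ B).card := card_biUnion_le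
    _ ≤ ∑ _x ∈ D, k := sum_le_sum fun x _ => hB x
    _ = k * D.card := by rw [sum_const, smul_eq_mul, mul_comm]

end Packing

theorem stmt_18 :
    (∀ (V : Type*) [Fintype V] [DecidableEq V] (G : SimpleGraph V)
        [DecidableRel G.Adj],
      (∀ S : Finset V, openPack G S → limPack G 2 S) ∧
        openPackNum G ≤ limPackNum G 2) ∧
    (∀ (V : Type*) [Fintype V] [DecidableEq V] (T : SimpleGraph V)
        [DecidableRel T.Adj], T.IsTree → 2 ≤ Fintype.card V →
      limPackNum T 2 ≤ 2 * openPackNum T) := by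
  refine ⟨fun V _ _ G _ => ⟨fun _ => limPack_two_of_openPack, openPackNum_le_limPackNum_two⟩,
    fun V _ _ T _ hT _ => ?_⟩
  obtain ⟨D, P, -, hD, hP, hDP⟩ := hT.hasMaximumNeighbours.exists_dominating_packing univ
  have hP_le : P.card ≤ openPackNum T :=
    card_le_sSup_card (openPack_of_pairwiseDisjoint_closedNbhd hP)
  refine sSup_card_le fun B hB => ?_
  calc B.card ≤ 2 * D.card := card_le_mul_card_of_limPack hB fun v => hD v (mem_univ v)
    _ ≤ 2 * openPackNum T := by omega
end
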